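/- arXiv:1811.12484 — 2 statements merged into one kernel-verified Lean document; each statement's English description precedes it below -/
import Mathlib

section
/- For vector fields E on a surface S with unit normal ν_S and a C¹ vector field p on ℝ³, the identity ((∇p)ᵀ ν_S) × E = −ν_S × (E × (∇×p)) − ν_S × ((E·∇)p) − (∇p)(ν_S × E) + (∇·p)(ν_S × E) holds pointwise on S. -/
/-!
The identity is pure linear algebra in `A = ∇p(x)` and holds over any commutative ring.
Linearizing the cofactor identity gives `(Aᵀu) × v + u × (Aᵀv) = (tr A − A)(u × v)`, and the
skew part of `A` acts as a cross product with the curl, `Aᵀv = Av + v × (∇×p)`; substituting the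
second into the first is the claim.
-/

namespace Stmt11

/-- Jacobian entries of a real vector field: `Dp p x i j = ∂ⱼ pᵢ (x)`. -/
noncomputable def Dp (p : (Fin 3 → ℝ) → Fin 3 → ℝ) (x : Fin 3 → ℝ) (i j : Fin 3) : ℝ :=
  fderiv ℝ (fun y => p y i) x (Pi.single j 1)

/-- Curl of a real vector field on `ℝ³`. -/
noncomputable def curlv (p : (Fin 3 → ℝ) → Fin 3 → ℝ) (x : Fin 3 → ℝ) : Fin 3 → ℝ :=
  ![Dp p x 2 1 - Dp p x 1 2, Dp p x 0 2 - Dp p x 2 0, Dp p x 1 0 - Dp p x 0 1]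

/-- Divergence of a real vector field on `ℝ³`. -/
noncomputable def divv (p : (Fin 3 → ℝ) → Fin 3 → ℝ) (x : Fin 3 → ℝ) : ℝ :=
  ∑ i, Dp p x i i

/-- Complex cross product on `ℂ³`. -/
def crossC (a b : Fin 3 → ℂ) : Fin 3 → ℂ :=
  ![a 1 * b 2 - a 2 * b 1, a 2 * b 0 - a 0 * b 2, a 0 * b 1 - a 1 * b 0]

/-- Coercion of a real vector to `ℂ³`. -/
def cvec (v : Fin 3 → ℝ) : Fin 3 → ℂ := fun i => (v i : ℂ)

open Matrix

section Algebra

variable {R : Type*} [CommRing R]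

/-- For a Jacobian matrix this is the curl. -/
def axialVec (A : Matrix (Fin 3) (Fin 3) R) : Fin 3 → R :=
  ![A 2 1 - A 1 2, A 0 2 - A 2 0, A 1 0 - A 0 1]

/-- Linearization at the identity of the cofactor identity `(M u) × (M v) = cof(M) (u × v)`. -/
theorem transpose_mulVec_cross_add_cross_transpose_mulVec (A : Matrix (Fin 3) (Fin 3) R)
    (u v : Fin 3 → R) :
    (Aᵀ *ᵥ u) ⨯₃ v + u ⨯₃ (Aᵀ *ᵥ v) = A.trace • (u ⨯₃ v) - A *ᵥ (u ⨯₃ v) := by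
  ext i
  fin_cases i <;>
    simp [cross_apply, mulVec, dotProduct, trace, Fin.sum_univ_three] <;> ring

theorem transpose_mulVec_eq_mulVec_add_cross_axialVec (A : Matrix (Fin 3) (Fin 3) R)
    (v : Fin 3 → R) : Aᵀ *ᵥ v = A *ᵥ v + v ⨯₃ axialVec A := by
  ext i
  fin_cases i <;>
    simp [cross_apply, mulVec, dotProduct, axialVec, Fin.sum_univ_three] <;> ring

theorem transpose_mulVec_cross (A : Matrix (Fin 3) (Fin 3) R) (u v : Fin 3 → R) :
    (Aᵀ *ᵥ u) ⨯₃ v = -(u ⨯₃ (v ⨯₃ axialVec A)) - u ⨯₃ (A *ᵥ v) - A *ᵥ (u ⨯₃ v)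
      + A.trace • (u ⨯₃ v) := by
  have h := transpose_mulVec_cross_add_cross_transpose_mulVec A u v
  rw [transpose_mulVec_eq_mulVec_add_cross_axialVec A v, map_add] at h
  rw [eq_sub_of_add_eq h]
  abel

end Algebra

theorem crossC_eq_cross (a b : Fin 3 → ℂ) : crossC a b = a ⨯₃ b := by
  rw [crossC, cross_apply]

noncomputable def jacobianC (p : (Fin 3 → ℝ) → Fin 3 → ℝ) (x : Fin 3 → ℝ) :
    Matrix (Fin 3) (Fin 3) ℂ :=
  Matrix.of fun i j => (Dp p x i j : ℂ)

theorem stmt_11_general (p : (Fin 3 → ℝ) → Fin 3 → ℝ) (x : Fin 3 → ℝ)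
    (ν : Fin 3 → ℝ) (E : Fin 3 → ℂ) :
    crossC (fun i => ((∑ j, ν j * Dp p x j i : ℝ) : ℂ)) E
      = - crossC (cvec ν) (crossC E (cvec (curlv p x)))
        - crossC (cvec ν) (fun i => ∑ j, E j * ((Dp p x i j : ℝ) : ℂ))
        - (fun i => ∑ j, ((Dp p x i j : ℝ) : ℂ) * crossC (cvec ν) E j)
        + (divv p x : ℂ) • crossC (cvec ν) E := by
  set A := jacobianC p x
  have hT : (fun i => ((∑ j, ν j * Dp p x j i : ℝ) : ℂ)) = Aᵀ *ᵥ cvec ν := by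
    ext i; simp [A, jacobianC, cvec, mulVec, dotProduct, mul_comm]
  have hcurl : cvec (curlv p x) = axialVec A := by
    ext i; fin_cases i <;> simp [A, jacobianC, cvec, curlv, axialVec]
  have hE : (fun i => ∑ j, E j * ((Dp p x i j : ℝ) : ℂ)) = A *ᵥ E := by
    ext i; simp [A, jacobianC, mulVec, dotProduct, mul_comm]
  have hdiv : (divv p x : ℂ) = A.trace := by
    simp [A, jacobianC, divv, trace]
  simp only [crossC_eq_cross, hT, hcurl, hE, hdiv]
  exact transpose_mulVec_cross A (cvec ν) E

/-- The pointwise identity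
`((∇p)ᵀ ν) × E = −ν×(E×(∇×p)) − ν×((E·∇)p) − (∇p)(ν×E) + (∇·p)(ν×E)`. -/
theorem stmt_11 (p : (Fin 3 → ℝ) → Fin 3 → ℝ) (x : Fin 3 → ℝ)
    (hp : DifferentiableAt ℝ p x) (ν : Fin 3 → ℝ) (hν : ∑ i, ν i ^ 2 = 1)
    (E : Fin 3 → ℂ) :
    crossC (fun i => ((∑ j, ν j * Dp p x j i : ℝ) : ℂ)) E
      = - crossC (cvec ν) (crossC E (cvec (curlv p x)))
        - crossC (cvec ν) (fun i => ∑ j, E j * ((Dp p x i j : ℝ) : ℂ))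
        - (fun i => ∑ j, ((Dp p x i j : ℝ) : ℂ) * crossC (cvec ν) E j)
        + (divv p x : ℂ) • crossC (cvec ν) E :=
  stmt_11_general p x ν E

end Stmt11
end

section
/- Let κ ∈ ℂ with Im κ > 0, q ∈ ℝ³ with |q| = 1, and let G(x) = (I + κ^{-2}∇∇)(exp(iκ|x|)/(4π|x|)) be the dyadic Green function. Then ‖G(· − x_ε)q‖_{L^∞(S_ε)} → ∞ as ε → 0, where x_ε = x* + ε e₃ for a point x* on a C² surface S and S_ε = S ∩ B_ε(x*). -/
namespace Stmt17

abbrev E3 := EuclideanSpace ℝ (Fin 3)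

/-- The fundamental solution `Φ(x) = exp(iκ|x|)/(4π|x|)`. -/
noncomputable def Phi (κ : ℂ) (x : E3) : ℂ :=
  Complex.exp (Complex.I * κ * (‖x‖ : ℝ)) / ((4 * Real.pi * ‖x‖ : ℝ) : ℂ)

/-- Partial derivative in the `i`-th coordinate direction. -/
noncomputable def pd (i : Fin 3) (g : E3 → ℂ) (x : E3) : ℂ :=
  fderiv ℝ g x (EuclideanSpace.single i (1 : ℝ))

/-- The dyadic Green function `G = (I + κ⁻²∇∇)Φ`, entrywise. -/
noncomputable def GreenD (κ : ℂ) (x : E3) (i j : Fin 3) : ℂ :=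
  (if i = j then Phi κ x else 0) + κ ^ (-2 : ℤ) * pd i (fun y => pd j (Phi κ) y) x

/-!
The potential is radial, `Φ(x) = φ(‖x‖)`, so its Hessian is
`∂ᵢ∂ⱼΦ(x) = δᵢⱼ φ'(r)/r + xᵢxⱼ/r² (φ''(r) - φ'(r)/r)` with `r = ‖x‖`. Taking `y = x* ∈ S_ε`, the
point `y - x_ε = -ε e₃` lies on an axis, where `G` is diagonal with entries `φ + κ⁻²φ'/ε` (twice)
and `φ + κ⁻²φ''`. Multiplied by `ε³` these tend to `-1/(4πκ²)` and `1/(2πκ²)`, so both blow up like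
`ε⁻³`, and so does the component of `G(-ε e₃) q` along any nonzero coordinate of `q`.
-/

open Filter Topology

section RadialCalculus

variable {F : Type*} [NormedAddCommGroup F] [InnerProductSpace ℝ F]

theorem hasFDerivAt_norm {x : F} (hx : x ≠ 0) : HasFDerivAt (‖·‖) (‖x‖⁻¹ • innerSL ℝ x) x := by
  have hsq : HasFDerivAt (fun y : F => √(‖y‖ ^ 2)) ((1 / (2 * √(‖x‖ ^ 2))) • 2 • innerSL ℝ x) x :=
    (Real.hasDerivAt_sqrt (by positivity)).comp_hasFDerivAt x (hasStrictFDerivAt_norm_sq x).hasFDerivAt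
  simp only [Real.sqrt_sq (norm_nonneg _)] at hsq
  convert hsq using 1
  ext v
  have hx' := norm_ne_zero_iff.mpr hx
  simp only [smul_apply, smul_eq_mul, nsmul_eq_mul, Nat.cast_ofNat]
  field_simp

theorem hasFDerivAt_comp_norm {E : Type*} [NormedAddCommGroup E] [NormedSpace ℝ E]
    {g : ℝ → E} {g' : E} {x : F} (hx : x ≠ 0) (hg : HasDerivAt g g' ‖x‖) :
    HasFDerivAt (fun y => g ‖y‖) ((‖x‖⁻¹ • innerSL ℝ x).smulRight g') x :=
  hg.hasFDerivAt.comp x (hasFDerivAt_norm hx)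

theorem pd_comp_norm {g : ℝ → ℂ} {g' : ℂ} {x : E3} (hx : x ≠ 0) (hg : HasDerivAt g g' ‖x‖)
    (i : Fin 3) : pd i (fun y => g ‖y‖) x = (x i / ‖x‖ : ℝ) • g' := by
  rw [pd, (hasFDerivAt_comp_norm hx hg).fderiv]
  simp [EuclideanSpace.inner_single_right, div_eq_inv_mul]

theorem pd_pd_comp_norm {g g' : ℝ → ℂ} {g'' : ℂ} {x : E3} (hx : x ≠ 0)
    (hg : ∀ r > 0, HasDerivAt g (g' r) r) (hg' : HasDerivAt g' g'' ‖x‖) (i j : Fin 3) :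
    pd i (fun y => pd j (fun z => g ‖z‖) y) x =
      (if i = j then 1 else 0 : ℝ) • (g' ‖x‖ / ‖x‖) +
        (x i * x j / ‖x‖ ^ 2 : ℝ) • (g'' - g' ‖x‖ / ‖x‖) := by
  have hr : (‖x‖ : ℂ) ≠ 0 := by exact_mod_cast norm_ne_zero_iff.mpr hx
  set k : ℝ → ℂ := fun r => g' r / r
  have hk : HasDerivAt k (g'' / ‖x‖ - g' ‖x‖ / ‖x‖ ^ 2) ‖x‖ := by
    refine (hg'.div (hasDerivAt_id _).ofReal_comp hr).congr_deriv ?_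
    simp only [id, Complex.ofReal_one]
    field_simp
  have hpd : (fun y => pd j (fun z => g ‖z‖) y) =ᶠ[𝓝 x] fun y => (y j) • k ‖y‖ := by
    filter_upwards [eventually_ne_nhds hx] with y hy
    rw [pd_comp_norm hy (hg _ (norm_pos_iff.mpr hy))]
    simp [k, div_eq_mul_inv, Complex.real_smul]
    ring
  have hprod : HasFDerivAt (fun y : E3 => y j • k ‖y‖) _ x :=
    ((EuclideanSpace.proj (𝕜 := ℝ) j).hasFDerivAt (x := x)).smul (hasFDerivAt_comp_norm hx hk)
  rw [pd, hpd.fderiv_eq, hprod.fderiv]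
  simp [EuclideanSpace.inner_single_right, k, @eq_comm _ j i]
  field_simp
  ring

end RadialCalculus

theorem tendsto_norm_atTop_of_tendsto_pow_smul {E : Type*} [NormedAddCommGroup E] [NormedSpace ℝ E]
    {f : ℝ → E} {n : ℕ} (hn : n ≠ 0) {L : E} (hL : L ≠ 0)
    (hf : Tendsto (fun ε => ε ^ n • f ε) (𝓝[>] 0) (𝓝 L)) :
    Tendsto (fun ε => ‖f ε‖) (𝓝[>] 0) atTop := by
  have hlim : Tendsto (fun ε : ℝ => ‖ε ^ n • f ε‖ * ε⁻¹ ^ n) (𝓝[>] 0) atTop :=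
    hf.norm.pos_mul_atTop (norm_pos_iff.mpr hL)
      ((tendsto_pow_atTop hn).comp tendsto_inv_nhdsGT_zero)
  refine hlim.congr' ?_
  filter_upwards [self_mem_nhdsWithin] with ε (hε : 0 < ε)
  rw [norm_smul, Real.norm_eq_abs, abs_pow, abs_of_pos hε, inv_pow, mul_comm, inv_mul_cancel_left₀]
  positivity

noncomputable def phiRadial (κ : ℂ) (r : ℝ) : ℂ :=
  Complex.exp (Complex.I * κ * r) / ((4 * Real.pi * r : ℝ) : ℂ)

noncomputable def phiRadial' (κ : ℂ) (r : ℝ) : ℂ :=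
  Complex.exp (Complex.I * κ * r) * (Complex.I * κ * r - 1) / (4 * Real.pi * r ^ 2)

noncomputable def phiRadial'' (κ : ℂ) (r : ℝ) : ℂ :=
  Complex.exp (Complex.I * κ * r) * (2 - 2 * Complex.I * κ * r - κ ^ 2 * r ^ 2) /
    (4 * Real.pi * r ^ 3)

theorem Phi_eq_phiRadial (κ : ℂ) : Phi κ = fun x => phiRadial κ ‖x‖ := rfl

theorem hasDerivAt_cexp_I_mul (κ : ℂ) (r : ℝ) :
    HasDerivAt (fun t : ℝ => Complex.exp (Complex.I * κ * t))
      (Complex.exp (Complex.I * κ * r) * (Complex.I * κ)) r := by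
  simpa using (((hasDerivAt_id r).ofReal_comp).const_mul (Complex.I * κ)).cexp

theorem hasDerivAt_phiRadial (κ : ℂ) {r : ℝ} (hr : r ≠ 0) :
    HasDerivAt (phiRadial κ) (phiRadial' κ r) r := by
  have hden : HasDerivAt (fun t : ℝ => ((4 * Real.pi * t : ℝ) : ℂ)) (4 * Real.pi) r := by
    simpa using ((hasDerivAt_id r).const_mul (4 * Real.pi)).ofReal_comp
  have hπ : (Real.pi : ℂ) ≠ 0 := by exact_mod_cast Real.pi_ne_zero
  have hrc : (r : ℂ) ≠ 0 := by exact_mod_cast hr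
  refine ((hasDerivAt_cexp_I_mul κ r).div hden (by push_cast; simp [hπ, hrc])).congr_deriv ?_
  rw [phiRadial']
  push_cast
  field_simp

theorem hasDerivAt_phiRadial' (κ : ℂ) {r : ℝ} (hr : r ≠ 0) :
    HasDerivAt (phiRadial' κ) (phiRadial'' κ r) r := by
  have hπ : (Real.pi : ℂ) ≠ 0 := by exact_mod_cast Real.pi_ne_zero
  have hrc : (r : ℂ) ≠ 0 := by exact_mod_cast hr
  have hofReal := (hasDerivAt_id r).ofReal_comp
  have hnum := (hasDerivAt_cexp_I_mul κ r).mul ((hofReal.const_mul (Complex.I * κ)).sub_const 1)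
  have hden := (hofReal.pow 2).const_mul (4 * (Real.pi : ℂ))
  refine (hnum.div hden (by simp [hπ, hrc])).congr_deriv ?_
  simp only [phiRadial'', id, Pi.mul_apply, Pi.pow_apply, Complex.ofReal_one]
  field_simp
  ring_nf
  simp only [Complex.I_sq]
  ring

noncomputable def greenOnAxis (κ : ℂ) (i : Fin 3) (ε : ℝ) : ℂ :=
  phiRadial κ ε + κ ^ (-2 : ℤ) * if i = 2 then phiRadial'' κ ε else phiRadial' κ ε / ε

theorem GreenD_neg_smul_single (κ : ℂ) {ε : ℝ} (hε : 0 < ε) (i j : Fin 3) :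
    GreenD κ (-(ε • EuclideanSpace.single 2 (1 : ℝ))) i j =
      if i = j then greenOnAxis κ i ε else 0 := by
  set x : E3 := -(ε • EuclideanSpace.single 2 (1 : ℝ))
  have hnorm : ‖x‖ = ε := by simp [x, norm_smul, hε.le]
  have hx : x ≠ 0 := norm_ne_zero_iff.mp (hnorm ▸ hε.ne')
  have hcoord : ∀ k : Fin 3, x k = if k = 2 then -ε else 0 := fun k => by
    by_cases hk : k = 2 <;> simp [x, hk]
  have hxx : x i * x j / ‖x‖ ^ 2 = if i = 2 ∧ j = 2 then 1 else 0 := by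
    rw [hcoord, hcoord, hnorm]
    by_cases h : i = 2 ∧ j = 2
    · simp [h, pow_two, hε.ne']
    · rw [if_neg h]
      by_cases hi : i = 2 <;> simp_all
  have hεc : (ε : ℂ) ≠ 0 := by exact_mod_cast hε.ne'
  simp only [GreenD, Phi_eq_phiRadial]
  rw [pd_pd_comp_norm hx (fun r hr => hasDerivAt_phiRadial κ hr.ne')
    (hasDerivAt_phiRadial' κ (norm_ne_zero_iff.mpr hx)), hxx, hnorm, greenOnAxis]
  by_cases hij : i = j
  · subst hij
    by_cases hi : i = 2
    · rw [if_pos rfl, if_pos rfl, if_pos ⟨hi, hi⟩, if_pos hi, if_pos rfl]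
      simp only [one_smul]
      field_simp
      ring
    · simp [hi]
  · have hnot : ¬(i = 2 ∧ j = 2) := fun h => hij (h.1.trans h.2.symm)
    simp [hij, hnot]

theorem tendsto_norm_greenOnAxis {κ : ℂ} (hκ : κ ≠ 0) (i : Fin 3) :
    Tendsto (fun ε => ‖greenOnAxis κ i ε‖) (𝓝[>] 0) atTop := by
  set c : ℝ → ℂ := fun ε => Complex.exp (Complex.I * κ * ε) / (4 * Real.pi) *
    if i = 2 then 2 / κ ^ 2 - 2 * Complex.I * ε / κ else ε ^ 2 + Complex.I * ε / κ - 1 / κ ^ 2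
  have hπ : (Real.pi : ℂ) ≠ 0 := by exact_mod_cast Real.pi_ne_zero
  have hc : Continuous c := by
    by_cases hi : i = 2 <;> simp only [c, hi, if_true, if_false] <;> fun_prop
  have hc0 : c 0 ≠ 0 := by
    by_cases hi : i = 2 <;> simp [c, hi, hπ, hκ]
  have hcubed : ∀ᶠ ε in 𝓝[>] 0, c ε = ε ^ 3 • greenOnAxis κ i ε := by
    filter_upwards [self_mem_nhdsWithin] with ε (hε : 0 < ε)
    have hεc : (ε : ℂ) ≠ 0 := by exact_mod_cast hε.ne'
    by_cases hi : i = 2 <;>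
    · simp only [c, greenOnAxis, phiRadial, phiRadial', phiRadial'', hi, if_true, if_false,
        Complex.real_smul, zpow_neg, zpow_ofNat]
      push_cast
      field_simp
      ring
  exact tendsto_norm_atTop_of_tendsto_pow_smul three_ne_zero hc0
    (((hc.tendsto 0).mono_left nhdsWithin_le_nhds).congr' hcubed)

theorem norm_le_sqrt_sum_norm_sq {ι E : Type*} [Fintype ι] [SeminormedAddCommGroup E]
    (v : ι → E) (i : ι) : ‖v i‖ ≤ √(∑ j, ‖v j‖ ^ 2) :=
  Real.le_sqrt_of_sq_le (Finset.single_le_sum (fun j _ => sq_nonneg ‖v j‖) (Finset.mem_univ i))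

/-- Blow-up of the dyadic Green function with a dipole source approaching a surface point:
`‖G(· − x_ε)q‖_{L^∞(S_ε)} → ∞` as `ε → 0`, where `x_ε = x* + ε e₃` and
`S_ε = S ∩ B_ε(x*)`. -/
theorem stmt_17 (κ : ℂ) (hκ : 0 < κ.im) (q : Fin 3 → ℝ) (hq : ∑ i, q i ^ 2 = 1)
    (S : Set E3) (xstar : E3) (hxs : xstar ∈ S) :
    ∀ M : ℝ, ∃ ε₀ > (0 : ℝ), ∀ ε : ℝ, 0 < ε → ε < ε₀ →
      ∃ y ∈ S ∩ Metric.ball xstar ε,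
        M ≤ Real.sqrt (∑ i, ‖
          (∑ j, GreenD κ (y - (xstar + ε • EuclideanSpace.single 2 (1 : ℝ))) i j * (q j : ℂ))‖ ^ 2) := by
  intro M
  have hκ0 : κ ≠ 0 := fun h => by simp [h] at hκ
  obtain ⟨i₀, hi₀⟩ : ∃ i, q i ≠ 0 := by
    by_contra! h
    simp [h] at hq
  have hblow : Tendsto (fun ε => |q i₀| * ‖greenOnAxis κ i₀ ε‖) (𝓝[>] 0) atTop :=
    (tendsto_norm_greenOnAxis hκ0 i₀).const_mul_atTop (abs_pos.mpr hi₀)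
  obtain ⟨ε₀, hε₀, hbig⟩ := (nhdsGT_basis 0).eventually_iff.mp (hblow.eventually_ge_atTop M)
  refine ⟨ε₀, hε₀, fun ε hε hεε₀ => ⟨xstar, ⟨hxs, Metric.mem_ball_self hε⟩, ?_⟩⟩
  rw [sub_add_cancel_left]
  calc M ≤ |q i₀| * ‖greenOnAxis κ i₀ ε‖ := hbig ⟨hε, hεε₀⟩
    _ = ‖∑ j, GreenD κ (-(ε • EuclideanSpace.single 2 (1 : ℝ))) i₀ j * (q j : ℂ)‖ := by
      simp [GreenD_neg_smul_single κ hε, mul_comm]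
    _ ≤ _ := norm_le_sqrt_sum_norm_sq
      (fun i => ∑ j, GreenD κ (-(ε • EuclideanSpace.single 2 (1 : ℝ))) i j * (q j : ℂ)) i₀

end Stmt17
end
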